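/- arXiv:1206.1965 — 2 statements merged into one kernel-verified Lean document; each statement's English description precedes it below -/
import Mathlib

section
/- Let A, B ⊆ ℝ^d be compact, t ∈ (0,1), b ∈ ℝ, and let B^- = B ∩ π^{-1}((-∞,b]), B^+ = B \ B^-, where π : ℝ^d → ℝ is projection to the first coordinate. Let a = sup{x : A_x ≠ ∅} and suppose |A_a| ≥ sup_{x ≥ b} |B_x|. If |A| = 1 + O(δ), |B| = 1 + O(δ), and |tA + (1-t)B| < |A|^t |B|^{1-t} + δ, then |tA + (1-t)B^-| < |A|^t |B^-|^{1-t} + O(δ) + O(|B^+|^2). -/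
/-!
Let `a` be the largest first coordinate of a point of `A`, and cut at the hyperplane
`x = t a + (1 - t) b`. The set `t A + (1 - t) B⁻` lies on its left. On its right, the slice of
`t A + (1 - t) B` at `t a + (1 - t) s`, for `s > b`, contains `t A_a + (1 - t) B_s`, which by
Brunn–Minkowski in dimension `d` and `|B_s| ≤ |A_a|` has measure at least `|B_s|`; integrating
over `s` gives measure at least `(1 - t)|B⁺|` there. Hence
`|t A + (1 - t) B⁻| + (1 - t)|B⁺| ≤ |t A + (1 - t) B| < |A|^t |B|^(1-t) + δ`, and the concavity of
`β ↦ β^(1-t)` turns `|A|^t |B|^(1-t)` into `|A|^t |B⁻|^(1-t) + (1 - t)|B⁺| + O(δ + |B⁺|²)`.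

The multiplicative Brunn–Minkowski inequality for compact sets is obtained by induction on the
dimension, applying the one-dimensional Prékopa–Leindler inequality to the slice volumes; the
latter follows from `|S + T| ≥ |S| + |T|` on the line applied to superlevel sets.
-/

open MeasureTheory Set
open scoped Pointwise ENNReal

theorem ENNReal.geom_mean_le_arith_mean2_weighted {t : ℝ} (ht : t ∈ Ioo 0 1) (x y : ℝ≥0∞) :
    x ^ t * y ^ (1 - t) ≤ ENNReal.ofReal t * x + ENNReal.ofReal (1 - t) * y := by
  obtain ⟨ht0, ht1⟩ := ht
  have hconj : t⁻¹.HolderConjugate (1 - t)⁻¹ :=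
    Real.holderConjugate_iff.2 ⟨(one_lt_inv₀ ht0).2 ht1, by simp⟩
  have := ENNReal.young_inequality (x ^ t) (y ^ (1 - t)) hconj
  rwa [ENNReal.rpow_rpow_inv ht0.ne', ENNReal.rpow_rpow_inv (sub_pos.2 ht1).ne',
    ENNReal.ofReal_inv_of_pos ht0, ENNReal.ofReal_inv_of_pos (sub_pos.2 ht1), div_eq_mul_inv,
    div_eq_mul_inv, inv_inv, inv_inv, mul_comm x, mul_comm y] at this

theorem Real.volume_add_volume_le_volume_add_of_isCompact {K L : Set ℝ} (hK : IsCompact K)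
    (hL : IsCompact L) (hK₀ : K.Nonempty) (hL₀ : L.Nonempty) :
    volume K + volume L ≤ volume (K + L) := by
  set M := sSup K
  set m := sInf L
  have hleft : K + {m} ⊆ (K + L) ∩ Iic (M + m) := by
    rintro _ ⟨x, hx, _, rfl, rfl⟩
    exact ⟨add_mem_add hx (hL.sInf_mem hL₀), add_le_add (le_csSup hK.bddAbove hx) le_rfl⟩
  have hright : {M} + L ⊆ (K + L) ∩ Ici (M + m) := by
    rintro _ ⟨_, rfl, y, hy, rfl⟩
    exact ⟨add_mem_add (hK.sSup_mem hK₀) hy, add_le_add le_rfl (csInf_le hL.bddBelow hy)⟩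
  calc volume K + volume L = volume (K + {m}) + volume ({M} + L) := by
        simp [add_singleton, singleton_add, image_add_right, image_add_left,
          measure_preimage_add_right, measure_preimage_add]
    _ ≤ volume ((K + L) ∩ Iic (M + m)) + volume ((K + L) ∩ Ioi (M + m)) := by
        rw [measure_congr ((ae_eq_refl (K + L)).inter Ioi_ae_eq_Ici)]
        exact add_le_add (measure_mono hleft) (measure_mono hright)
    _ = volume (K + L) := by
        rw [← compl_Iic, ← sdiff_eq, measure_inter_add_sdiff _ measurableSet_Iic]

theorem Real.volume_add_volume_le_of_add_subset {S T W : Set ℝ} (hS : MeasurableSet S)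
    (hT : MeasurableSet T) (hS₀ : S.Nonempty) (hT₀ : T.Nonempty) (hW : S + T ⊆ W) :
    volume S + volume T ≤ volume W := by
  obtain ⟨x₀, hx₀⟩ := hS₀
  obtain ⟨y₀, hy₀⟩ := hT₀
  rw [hS.measure_eq_iSup_isCompact, hT.measure_eq_iSup_isCompact]
  simp_rw [iSup_and']
  refine ENNReal.biSup_add_biSup_le' ⟨∅, empty_subset _, isCompact_empty⟩
    ⟨∅, empty_subset _, isCompact_empty⟩ fun K ⟨hKS, hK⟩ L ⟨hLT, hL⟩ => ?_
  -- adjoining a point makes both sets nonempty without decreasing their measure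
  calc volume K + volume L ≤ volume (insert x₀ K) + volume (insert y₀ L) :=
        add_le_add (measure_mono (subset_insert _ _)) (measure_mono (subset_insert _ _))
    _ ≤ volume (insert x₀ K + insert y₀ L) :=
        volume_add_volume_le_volume_add_of_isCompact (hK.insert x₀) (hL.insert y₀)
          (insert_nonempty _ _) (insert_nonempty _ _)
    _ ≤ volume W := measure_mono ((add_subset_add (insert_subset hx₀ hKS)
          (insert_subset hy₀ hLT)).trans hW)

theorem Real.ofReal_mul_volume_add_le_of_smul_add_smul_subset {t : ℝ} (ht : t ∈ Ioo 0 1)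
    {S T W : Set ℝ} (hS : MeasurableSet S) (hT : MeasurableSet T) (hS₀ : S.Nonempty)
    (hT₀ : T.Nonempty) (hW : t • S + (1 - t) • T ⊆ W) :
    ENNReal.ofReal t * volume S + ENNReal.ofReal (1 - t) * volume T ≤ volume W := by
  have hscale (r : ℝ) (hr : 0 < r) (U : Set ℝ) : volume (r • U) = ENNReal.ofReal r * volume U := by
    rw [Measure.addHaar_smul, Module.finrank_self, pow_one, abs_of_pos hr]
  rw [← hscale t ht.1, ← hscale (1 - t) (sub_pos.2 ht.2)]
  exact volume_add_volume_le_of_add_subset (hS.const_smul₀ t) (hT.const_smul₀ _) hS₀.smul_set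
    hT₀.smul_set hW

theorem lintegral_comp_mul_add {r : ℝ} (hr : 0 < r) (e : ℝ) {φ : ℝ → ℝ≥0∞} (hφ : Measurable φ) :
    ∫⁻ x, φ x = ENNReal.ofReal r * ∫⁻ s, φ (r * s + e) := by
  have hmap : Measure.map (fun s : ℝ => r * s + e) volume = ENNReal.ofReal r⁻¹ • volume := by
    rw [show (fun s : ℝ => r * s + e) = (· + e) ∘ (r * ·) from rfl,
      ← Measure.map_map (measurable_add_const e) (measurable_const_mul r),
      Real.map_volume_mul_left hr.ne', Measure.map_smul, map_add_right_eq_self,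
      abs_of_pos (inv_pos.2 hr)]
  rw [← lintegral_map hφ ((measurable_const_mul r).add_const e), hmap, lintegral_smul_measure,
    smul_eq_mul, ← mul_assoc, ← ENNReal.ofReal_mul hr.le, mul_inv_cancel₀ hr.ne',
    ENNReal.ofReal_one, one_mul]

theorem setLIntegral_Ioi_comp_mul {c : ℝ} (hc : 0 < c) {φ : ℝ → ℝ≥0∞} (hφ : Measurable φ) :
    ∫⁻ r in Ioi 0, φ r = ENNReal.ofReal c * ∫⁻ ρ in Ioi 0, φ (c * ρ) := by
  rw [← lintegral_indicator measurableSet_Ioi, ← lintegral_indicator measurableSet_Ioi,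
    lintegral_comp_mul_add hc 0 (hφ.indicator measurableSet_Ioi)]
  congr 2 with ρ
  simp [indicator, mul_pos_iff_of_pos_left hc]

theorem measurable_measure_lt {α : Type*} [MeasurableSpace α] (μ : Measure α) (f : α → ℝ) :
    Measurable fun r => μ {x | r < f x} :=
  Antitone.measurable fun _ _ hrs => measure_mono fun _ hx => lt_of_le_of_lt hrs hx

theorem lintegral_ofReal_eq_mul_setLIntegral_meas_lt {α : Type*} [MeasurableSpace α]
    (μ : Measure α) {f : α → ℝ} (hf : Measurable f) (hf₀ : ∀ x, 0 ≤ f x) {c : ℝ} (hc : 0 < c) :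
    ∫⁻ x, ENNReal.ofReal (f x) ∂μ = ENNReal.ofReal c * ∫⁻ ρ in Ioi 0, μ {x | c * ρ < f x} := by
  rw [lintegral_eq_lintegral_meas_lt μ (Filter.Eventually.of_forall hf₀) hf.aemeasurable,
    setLIntegral_Ioi_comp_mul hc (measurable_measure_lt μ f)]

theorem ofReal_mul_volume_lt_add_le {t : ℝ} (ht : t ∈ Ioo 0 1) {f g h : ℝ → ℝ}
    (hf : Measurable f) (hg : Measurable g)
    (hfgh : ∀ x y, f x ^ t * g y ^ (1 - t) ≤ h (t * x + (1 - t) * y))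
    {F G : ℝ} (hF : IsLUB (range f) F) (hG : IsLUB (range g) G) (hF₀ : 0 < F) (hG₀ : 0 < G)
    {ρ : ℝ} (hρ : 0 < ρ) :
    ENNReal.ofReal t * volume {x | F * ρ < f x}
        + ENNReal.ofReal (1 - t) * volume {y | G * ρ < g y}
      ≤ volume {z | F ^ t * G ^ (1 - t) * ρ < h z} := by
  obtain ⟨ht₀, ht₁⟩ := ht
  rcases lt_or_ge ρ 1 with hρ₁ | hρ₁
  · have hS₀ : {x | F * ρ < f x}.Nonempty := by
      obtain ⟨_, ⟨x, rfl⟩, hx⟩ := (lt_isLUB_iff hF).1 (mul_lt_of_lt_one_right hF₀ hρ₁)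
      exact ⟨x, hx⟩
    have hT₀ : {y | G * ρ < g y}.Nonempty := by
      obtain ⟨_, ⟨y, rfl⟩, hy⟩ := (lt_isLUB_iff hG).1 (mul_lt_of_lt_one_right hG₀ hρ₁)
      exact ⟨y, hy⟩
    refine Real.ofReal_mul_volume_add_le_of_smul_add_smul_subset ⟨ht₀, ht₁⟩
      (measurableSet_lt measurable_const hf) (measurableSet_lt measurable_const hg) hS₀ hT₀ ?_
    rintro _ ⟨_, ⟨x, hx, rfl⟩, _, ⟨y, hy, rfl⟩, rfl⟩
    refine lt_of_lt_of_le ?_ (hfgh x y)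
    calc F ^ t * G ^ (1 - t) * ρ = (F * ρ) ^ t * (G * ρ) ^ (1 - t) := by
          rw [Real.mul_rpow hF₀.le hρ.le, Real.mul_rpow hG₀.le hρ.le, mul_mul_mul_comm,
            ← Real.rpow_add hρ, add_sub_cancel, Real.rpow_one]
      _ < f x ^ t * g y ^ (1 - t) :=
          mul_lt_mul'' (Real.rpow_lt_rpow (by positivity) hx ht₀)
            (Real.rpow_lt_rpow (by positivity) hy (sub_pos.2 ht₁)) (by positivity) (by positivity)
  · have hS : {x | F * ρ < f x} = ∅ := eq_empty_of_forall_notMem fun x hx =>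
      (hF.1 ⟨x, rfl⟩).not_gt ((le_mul_of_one_le_right hF₀.le hρ₁).trans_lt hx)
    have hT : {y | G * ρ < g y} = ∅ := eq_empty_of_forall_notMem fun y hy =>
      (hG.1 ⟨y, rfl⟩).not_gt ((le_mul_of_one_le_right hG₀.le hρ₁).trans_lt hy)
    simp [hS, hT]

theorem prekopa_leindler {t : ℝ} (ht : t ∈ Ioo 0 1) {f g h : ℝ → ℝ}
    (hf : Measurable f) (hg : Measurable g) (hh : Measurable h)
    (hf₀ : ∀ x, 0 ≤ f x) (hg₀ : ∀ x, 0 ≤ g x) (hfb : BddAbove (range f)) (hgb : BddAbove (range g))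
    (hfgh : ∀ x y, f x ^ t * g y ^ (1 - t) ≤ h (t * x + (1 - t) * y)) :
    (∫⁻ x, ENNReal.ofReal (f x)) ^ t * (∫⁻ x, ENNReal.ofReal (g x)) ^ (1 - t)
      ≤ ∫⁻ x, ENNReal.ofReal (h x) := by
  obtain ⟨ht₀, ht₁⟩ := ht
  have h1t : 0 < 1 - t := sub_pos.2 ht₁
  have hF := isLUB_ciSup hfb
  have hG := isLUB_ciSup hgb
  set F := ⨆ x, f x
  set G := ⨆ x, g x
  rcases (hf₀ 0 |>.trans (hF.1 ⟨0, rfl⟩)).eq_or_lt with hF₀ | hF₀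
  · have : ∀ x, f x = 0 := fun x => le_antisymm (hF₀ ▸ hF.1 ⟨x, rfl⟩) (hf₀ x)
    simp [this, ENNReal.zero_rpow_of_pos ht₀]
  rcases (hg₀ 0 |>.trans (hG.1 ⟨0, rfl⟩)).eq_or_lt with hG₀ | hG₀
  · have : ∀ x, g x = 0 := fun x => le_antisymm (hG₀ ▸ hG.1 ⟨x, rfl⟩) (hg₀ x)
    simp [this, ENNReal.zero_rpow_of_pos h1t]
  set P := F ^ t * G ^ (1 - t)
  have hP : 0 < P := mul_pos (Real.rpow_pos_of_pos hF₀ t) (Real.rpow_pos_of_pos hG₀ _)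
  have hh₀ (z : ℝ) : 0 ≤ h z := by
    have := hfgh z z
    rw [← add_mul, add_sub_cancel, one_mul] at this
    exact (mul_nonneg (Real.rpow_nonneg (hf₀ z) t) (Real.rpow_nonneg (hg₀ z) _)).trans this
  have hmeas (k : ℝ → ℝ) (c : ℝ) : Measurable fun ρ => volume {x | c * ρ < k x} :=
    (measurable_measure_lt volume k).comp (measurable_const_mul c)
  set If := ∫⁻ ρ in Ioi 0, volume {x | F * ρ < f x}
  set Ig := ∫⁻ ρ in Ioi 0, volume {y | G * ρ < g y}
  calc (∫⁻ x, ENNReal.ofReal (f x)) ^ t * (∫⁻ x, ENNReal.ofReal (g x)) ^ (1 - t)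
      = ENNReal.ofReal P * (If ^ t * Ig ^ (1 - t)) := by
        rw [lintegral_ofReal_eq_mul_setLIntegral_meas_lt _ hf hf₀ hF₀,
          lintegral_ofReal_eq_mul_setLIntegral_meas_lt _ hg hg₀ hG₀,
          ENNReal.mul_rpow_of_nonneg _ _ ht₀.le, ENNReal.mul_rpow_of_nonneg _ _ h1t.le,
          ENNReal.ofReal_mul (Real.rpow_nonneg hF₀.le t), ENNReal.ofReal_rpow_of_pos hF₀,
          ENNReal.ofReal_rpow_of_pos hG₀]
        ring
    _ ≤ ENNReal.ofReal P * (ENNReal.ofReal t * If + ENNReal.ofReal (1 - t) * Ig) := by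
        gcongr
        exact ENNReal.geom_mean_le_arith_mean2_weighted ⟨ht₀, ht₁⟩ If Ig
    _ ≤ ENNReal.ofReal P * ∫⁻ ρ in Ioi 0, volume {z | P * ρ < h z} := by
        gcongr
        rw [← lintegral_const_mul _ (hmeas f F), ← lintegral_const_mul _ (hmeas g G),
          ← lintegral_add_left ((hmeas f F).const_mul _)]
        exact setLIntegral_mono (hmeas h P) fun ρ hρ =>
          ofReal_mul_volume_lt_add_le ⟨ht₀, ht₁⟩ hf hg hfgh hF hG hF₀ hG₀ hρ
    _ = ∫⁻ x, ENNReal.ofReal (h x) :=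
        (lintegral_ofReal_eq_mul_setLIntegral_meas_lt _ hh hh₀ hP).symm

def SatisfiesBrunnMinkowski {E : Type*} [AddCommGroup E] [Module ℝ E] [TopologicalSpace E]
    [MeasurableSpace E] (t : ℝ) (μ : Measure E) : Prop :=
  ∀ K L : Set E, IsCompact K → IsCompact L → μ K ^ t * μ L ^ (1 - t) ≤ μ (t • K + (1 - t) • L)

theorem IsCompact.preimage_prodMk {X Y : Type*} [TopologicalSpace X] [TopologicalSpace Y]
    [T2Space X] [T2Space Y] {S : Set (X × Y)} (hS : IsCompact S) (x : X) :
    IsCompact (Prod.mk x ⁻¹' S) :=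
  (hS.image continuous_snd).of_isClosed_subset (hS.isClosed.preimage (.prodMk_right x))
    fun y hy => ⟨(x, y), hy, rfl⟩

theorem IsCompact.fst_le_sSup_nonempty_preimage_prodMk {Y : Type*} [TopologicalSpace Y]
    {A : Set (ℝ × Y)} (hA : IsCompact A) {p : ℝ × Y} (hp : p ∈ A) :
    p.1 ≤ sSup {x | (Prod.mk x ⁻¹' A).Nonempty} := by
  refine le_csSup ((hA.image continuous_fst).bddAbove.mono ?_) ⟨p.2, hp⟩
  rintro x ⟨y, hy⟩
  exact ⟨(x, y), hy, rfl⟩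

theorem smul_preimage_prodMk_add_smul_subset {X : Type*} [AddCommGroup X] [Module ℝ X]
    (a b x y : ℝ) (S T : Set (ℝ × X)) :
    a • (Prod.mk x ⁻¹' S) + b • (Prod.mk y ⁻¹' T)
      ⊆ Prod.mk (a * x + b * y) ⁻¹' (a • S + b • T) := by
  rintro _ ⟨_, ⟨u, hu, rfl⟩, _, ⟨v, hv, rfl⟩, rfl⟩
  show a • (x, u) + b • (y, v) ∈ a • S + b • T
  exact add_mem_add (smul_mem_smul_set (a := a) hu) (smul_mem_smul_set (a := b) hv)

theorem SatisfiesBrunnMinkowski.prod {X : Type*} [NormedAddCommGroup X] [NormedSpace ℝ X]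
    [MeasurableSpace X] [BorelSpace X] {μ : Measure X} [SFinite μ] [IsFiniteMeasureOnCompacts μ]
    {t : ℝ} (ht : t ∈ Ioo 0 1) (hμ : SatisfiesBrunnMinkowski t μ) :
    SatisfiesBrunnMinkowski t ((volume : Measure ℝ).prod μ) := by
  intro A B hA hB
  have hC : IsCompact (t • A + (1 - t) • B) := (hA.smul t).add (hB.smul _)
  have hfubini {S : Set (ℝ × X)} (hS : IsCompact S) :
      (volume.prod μ) S = ∫⁻ x, ENNReal.ofReal (μ (Prod.mk x ⁻¹' S)).toReal := by
    rw [Measure.prod_apply hS.measurableSet]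
    congr with x
    rw [ENNReal.ofReal_toReal (hS.preimage_prodMk x).measure_ne_top]
  have hmeas {S : Set (ℝ × X)} (hS : IsCompact S) :
      Measurable fun x => (μ (Prod.mk x ⁻¹' S)).toReal :=
    (measurable_measure_prodMk_left hS.measurableSet).ennreal_toReal
  have hbdd {S : Set (ℝ × X)} (hS : IsCompact S) :
      BddAbove (range fun x => (μ (Prod.mk x ⁻¹' S)).toReal) := by
    refine ⟨(μ (Prod.snd '' S)).toReal, ?_⟩
    rintro _ ⟨x, rfl⟩
    exact ENNReal.toReal_mono (hS.image continuous_snd).measure_ne_top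
      (measure_mono fun y hy => ⟨_, hy, rfl⟩)
  rw [hfubini hA, hfubini hB, hfubini hC]
  refine prekopa_leindler ht (hmeas hA) (hmeas hB) (hmeas hC) (fun _ => ENNReal.toReal_nonneg)
    (fun _ => ENNReal.toReal_nonneg) (hbdd hA) (hbdd hB) fun x y => ?_
  rw [ENNReal.toReal_rpow, ENNReal.toReal_rpow, ← ENNReal.toReal_mul]
  exact ENNReal.toReal_mono (hC.preimage_prodMk _).measure_ne_top
    ((hμ _ _ (hA.preimage_prodMk x) (hB.preimage_prodMk y)).trans
      (measure_mono (smul_preimage_prodMk_add_smul_subset _ _ _ _ _ _)))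

theorem SatisfiesBrunnMinkowski.of_subsingleton {E : Type*} [AddCommGroup E] [Module ℝ E]
    [TopologicalSpace E] [MeasurableSpace E] [Subsingleton E] (μ : Measure E) {t : ℝ}
    (ht : t ∈ Ioo 0 1) : SatisfiesBrunnMinkowski t μ := by
  intro K L _ _
  rcases K.eq_empty_or_nonempty with rfl | hK
  · simp [ENNReal.zero_rpow_of_pos ht.1]
  rcases L.eq_empty_or_nonempty with rfl | hL
  · simp [ENNReal.zero_rpow_of_pos (sub_pos.2 ht.2)]
  rw [(hK.smul_set.add hL.smul_set).eq_univ, hK.eq_univ, hL.eq_univ,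
    ← ENNReal.rpow_add_of_nonneg _ _ ht.1.le (sub_pos.2 ht.2).le, add_sub_cancel, ENNReal.rpow_one]

theorem SatisfiesBrunnMinkowski.of_measurePreserving {E F : Type*} [NormedAddCommGroup E]
    [NormedSpace ℝ E] [MeasurableSpace E] [BorelSpace E] [NormedAddCommGroup F] [NormedSpace ℝ F]
    [MeasurableSpace F] [BorelSpace F] {μ : Measure E} {ν : Measure F} {t : ℝ}
    (hν : SatisfiesBrunnMinkowski t ν) (e : E ≃L[ℝ] F) (he : MeasurePreserving e μ ν) :
    SatisfiesBrunnMinkowski t μ := by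
  have hvol (S : Set E) : μ S = ν (e '' S) := by
    rw [← he.measure_preimage_emb e.toHomeomorph.measurableEmbedding, e.injective.preimage_image]
  intro K L hK hL
  simpa only [hvol, image_add, image_smul_set] using
    hν _ _ (hK.image e.continuous) (hL.image e.continuous)

theorem satisfiesBrunnMinkowski_volume_pi (n : ℕ) {t : ℝ} (ht : t ∈ Ioo 0 1) :
    SatisfiesBrunnMinkowski t (volume : Measure (Fin n → ℝ)) := by
  induction n with
  | zero => exact .of_subsingleton _ ht
  | succ n ih =>
    refine (ih.prod ht).of_measurePreserving (Fin.consEquivL ℝ fun _ => ℝ).symm ?_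
    rw [← Measure.volume_eq_prod]
    exact volume_preserving_piFinSuccAbove (fun _ : Fin (n + 1) => ℝ) 0

theorem ofReal_mul_prod_le_of_measure_preimage_prodMk_le {X : Type*} [MeasurableSpace X]
    {μ : Measure X} [SFinite μ] {r : ℝ} (hr : 0 < r) (e : ℝ)
    {S T : Set (ℝ × X)} (hS : MeasurableSet S) (hT : MeasurableSet T)
    (hST : ∀ s, μ (Prod.mk s ⁻¹' S) ≤ μ (Prod.mk (r * s + e) ⁻¹' T)) :
    ENNReal.ofReal r * (volume.prod μ) S ≤ (volume.prod μ) T := by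
  rw [Measure.prod_apply hS, Measure.prod_apply hT,
    lintegral_comp_mul_add hr e (measurable_measure_prodMk_left hT)]
  exact mul_le_mul_right (lintegral_mono hST) _

theorem SatisfiesBrunnMinkowski.measure_preimage_prodMk_le {X : Type*} [AddCommGroup X]
    [Module ℝ X] [TopologicalSpace X] [T2Space X] [MeasurableSpace X] {μ : Measure X} {t : ℝ}
    (ht : t ∈ Ioo 0 1) (hμ : SatisfiesBrunnMinkowski t μ) {A B : Set (ℝ × X)} (hA : IsCompact A)
    (hB : IsCompact B) {a s : ℝ} (hBA : μ (Prod.mk s ⁻¹' B) ≤ μ (Prod.mk a ⁻¹' A)) :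
    μ (Prod.mk s ⁻¹' B) ≤ μ (Prod.mk (t * a + (1 - t) * s) ⁻¹' (t • A + (1 - t) • B)) :=
  calc μ (Prod.mk s ⁻¹' B)
      = μ (Prod.mk s ⁻¹' B) ^ t * μ (Prod.mk s ⁻¹' B) ^ (1 - t) := by
        rw [← ENNReal.rpow_add_of_nonneg _ _ ht.1.le (sub_pos.2 ht.2).le, add_sub_cancel,
          ENNReal.rpow_one]
    _ ≤ μ (Prod.mk a ⁻¹' A) ^ t * μ (Prod.mk s ⁻¹' B) ^ (1 - t) :=
        mul_le_mul_left (ENNReal.rpow_le_rpow hBA ht.1.le) _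
    _ ≤ _ := (hμ _ _ (hA.preimage_prodMk a) (hB.preimage_prodMk s)).trans
        (measure_mono (smul_preimage_prodMk_add_smul_subset _ _ _ _ _ _))

theorem prod_smul_add_smul_inter_add_ofReal_mul_le {X : Type*} [NormedAddCommGroup X]
    [NormedSpace ℝ X] [MeasurableSpace X] [BorelSpace X] {μ : Measure X} [SFinite μ] {t : ℝ}
    (ht : t ∈ Ioo 0 1) (hμ : SatisfiesBrunnMinkowski t μ) {A B : Set (ℝ × X)}
    (hA : IsCompact A) (hB : IsCompact B) {a b : ℝ} (hAa : ∀ p ∈ A, p.1 ≤ a)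
    (hBA : ∀ x, b ≤ x → μ (Prod.mk x ⁻¹' B) ≤ μ (Prod.mk a ⁻¹' A)) :
    (volume.prod μ) (t • A + (1 - t) • (B ∩ {p | p.1 ≤ b}))
        + ENNReal.ofReal (1 - t) * (volume.prod μ) (B \ {p | p.1 ≤ b})
      ≤ (volume.prod μ) (t • A + (1 - t) • B) := by
  obtain ⟨ht₀, ht₁⟩ := ht
  set D := t • A + (1 - t) • B
  set H : Set (ℝ × X) := {p | p.1 ≤ t * a + (1 - t) * b}
  have hH : MeasurableSet H := measurableSet_le measurable_fst measurable_const
  have hbelow : t • A + (1 - t) • (B ∩ {p | p.1 ≤ b}) ⊆ D ∩ H := by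
    rintro _ ⟨_, ⟨u, hu, rfl⟩, _, ⟨v, hv, rfl⟩, rfl⟩
    refine ⟨add_mem_add (smul_mem_smul_set hu) (smul_mem_smul_set hv.1), ?_⟩
    show t * u.1 + (1 - t) * v.1 ≤ t * a + (1 - t) * b
    have := hAa u hu
    have : v.1 ≤ b := hv.2
    nlinarith
  have habove : ENNReal.ofReal (1 - t) * (volume.prod μ) (B \ {p | p.1 ≤ b})
      ≤ (volume.prod μ) (D \ H) := by
    refine ofReal_mul_prod_le_of_measure_preimage_prodMk_le (sub_pos.2 ht₁) (t * a)
      (hB.measurableSet.diff (measurableSet_le measurable_fst measurable_const))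
      (((hA.smul t).add (hB.smul _)).measurableSet.diff hH) fun s => ?_
    rcases le_or_gt s b with hs | hs
    · have : Prod.mk s ⁻¹' (B \ {p | p.1 ≤ b}) = ∅ :=
        eq_empty_of_forall_notMem fun _ hy => hy.2 hs
      simp [this]
    have hcut : t * a + (1 - t) * b < (1 - t) * s + t * a := by nlinarith
    calc μ (Prod.mk s ⁻¹' (B \ {p | p.1 ≤ b}))
        ≤ μ (Prod.mk s ⁻¹' B) := measure_mono fun _ hy => hy.1
      _ ≤ μ (Prod.mk (t * a + (1 - t) * s) ⁻¹' D) :=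
          hμ.measure_preimage_prodMk_le ⟨ht₀, ht₁⟩ hA hB (hBA s hs.le)
      _ = μ (Prod.mk ((1 - t) * s + t * a) ⁻¹' D) := by rw [add_comm (t * a)]
      _ ≤ μ (Prod.mk ((1 - t) * s + t * a) ⁻¹' (D \ H)) :=
          measure_mono fun _ hy => ⟨hy, hcut.not_ge⟩
  calc (volume.prod μ) (t • A + (1 - t) • (B ∩ {p | p.1 ≤ b}))
        + ENNReal.ofReal (1 - t) * (volume.prod μ) (B \ {p | p.1 ≤ b})
      ≤ (volume.prod μ) (D ∩ H) + (volume.prod μ) (D \ H) :=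
        add_le_add (measure_mono hbelow) habove
    _ = (volume.prod μ) D := measure_inter_add_sdiff D hH

theorem Real.rpow_le_rpow_add_mul_sub {x y p : ℝ} (hx : 0 < x) (hy : 0 ≤ y) (hp₀ : 0 ≤ p)
    (hp₁ : p ≤ 1) : y ^ p ≤ x ^ p + p * x ^ (p - 1) * (y - x) := by
  have hs : -1 ≤ (y - x) / x := by
    rw [le_div_iff₀ hx]
    linarith
  calc y ^ p = (x * (1 + (y - x) / x)) ^ p := by
        congr 1
        field_simp
        ring
    _ = x ^ p * (1 + (y - x) / x) ^ p := Real.mul_rpow hx.le (by linarith)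
    _ ≤ x ^ p * (1 + p * ((y - x) / x)) := by
        gcongr
        exact rpow_one_add_le_one_add_mul_self hs hp₀ hp₁
    _ = x ^ p + p * x ^ (p - 1) * (y - x) := by
        rw [Real.rpow_sub_one hx.ne']
        field_simp

theorem rpow_mul_add_rpow_le {t α β γ : ℝ} (ht : t ∈ Ioo 0 1) (hα : 0 ≤ α) (hβ : 0 < β)
    (hγ : 0 ≤ γ) :
    α ^ t * (β + γ) ^ (1 - t) ≤ α ^ t * β ^ (1 - t) + (1 - t) * γ * (1 + t * (α - β) / β) := by
  obtain ⟨ht₀, ht₁⟩ := ht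
  have hβγ := Real.rpow_le_rpow_add_mul_sub hβ (by linarith : 0 ≤ β + γ) (sub_pos.2 ht₁).le
    (sub_le_self _ ht₀.le)
  have hα' := Real.rpow_le_rpow_add_mul_sub hβ hα ht₀.le ht₁.le
  have hβt : β ^ t * β ^ (-t) = 1 := by
    rw [← Real.rpow_add hβ, add_neg_cancel, Real.rpow_zero]
  have hβt' : β ^ (t - 1) * β ^ (-t) = β⁻¹ := by
    rw [← Real.rpow_add hβ, show t - 1 + -t = -1 by ring, Real.rpow_neg_one]
  rw [sub_sub_cancel_left] at hβγ
  calc α ^ t * (β + γ) ^ (1 - t)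
      ≤ α ^ t * (β ^ (1 - t) + (1 - t) * β ^ (-t) * (β + γ - β)) := by gcongr
    _ = α ^ t * β ^ (1 - t) + (1 - t) * γ * (α ^ t * β ^ (-t)) := by ring
    _ ≤ α ^ t * β ^ (1 - t) + (1 - t) * γ * ((β ^ t + t * β ^ (t - 1) * (α - β)) * β ^ (-t)) := by
        gcongr
    _ = α ^ t * β ^ (1 - t) + (1 - t) * γ * (1 + t * (α - β) / β) := by
        rw [add_mul, hβt, div_eq_mul_inv, ← hβt']
        ring

theorem lt_rpow_mul_rpow_add_of_add_lt {C₁ δ t α β γ u : ℝ} (ht : t ∈ Ioo 0 1) (hδ : 0 < δ)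
    (hα₀ : 0 ≤ α) (hβ₀ : 0 ≤ β) (hγ₀ : 0 ≤ γ) (hα : |α - 1| ≤ C₁ * δ)
    (hβγ : |β + γ - 1| ≤ C₁ * δ) (hu : u + (1 - t) * γ < α ^ t * (β + γ) ^ (1 - t) + δ) :
    u < α ^ t * β ^ (1 - t) + (5 * C₁ + 16) * δ + (5 * C₁ + 16) * γ ^ 2 := by
  obtain ⟨ht₀, ht₁⟩ := ht
  obtain ⟨hα₁, hα₂⟩ := abs_le.1 hα
  obtain ⟨hβ₁, hβ₂⟩ := abs_le.1 hβγ
  have hC₁ : 0 ≤ C₁ := nonneg_of_mul_nonneg_left ((abs_nonneg _).trans hα) hδ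
  have hβt : 0 ≤ α ^ t * β ^ (1 - t) := by positivity
  have hamgm : α ^ t * (β + γ) ^ (1 - t) ≤ t * α + (1 - t) * (β + γ) :=
    Real.geom_mean_le_arith_mean2_weighted ht₀.le (sub_pos.2 ht₁).le hα₀ (by linarith) (by ring)
  rcases le_or_gt (C₁ * δ) (1 / 4) with hδ₄ | hδ₄
  · rcases le_or_gt γ (1 / 4) with hγ₄ | hγ₄
    · have hβ : 0 < β := by linarith
      have hq : t * (α - β) / β ≤ 2 * (2 * (C₁ * δ) + γ) := by
        rw [div_le_iff₀ hβ]
        nlinarith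
      have hgain : (1 - t) * γ * (1 + t * (α - β) / β) ≤ (1 - t) * γ + C₁ * δ + 2 * γ ^ 2 := by
        nlinarith [mul_le_mul_of_nonneg_left hq (by positivity : 0 ≤ (1 - t) * γ),
          mul_nonneg ht₀.le (by positivity : 0 ≤ γ * (2 * (2 * (C₁ * δ) + γ)))]
      nlinarith [rpow_mul_add_rpow_le ⟨ht₀, ht₁⟩ hα₀ hβ hγ₀, mul_nonneg hC₁ hδ.le,
        mul_nonneg hC₁ (sq_nonneg γ)]
    · nlinarith
  · nlinarith

theorem ENNReal.toReal_add_mul_toReal_lt {u v : ℝ≥0∞} {r x : ℝ} (hr : 0 ≤ r) (hv : v ≠ ⊤)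
    (h : u + ENNReal.ofReal r * v < ENNReal.ofReal x) : u.toReal + r * v.toReal < x := by
  have hu : u ≠ ⊤ := (le_self_add.trans_lt h).ne_top
  have hrv : ENNReal.ofReal r * v ≠ ⊤ := ENNReal.mul_ne_top ENNReal.ofReal_ne_top hv
  rwa [ENNReal.lt_ofReal_iff_toReal_lt (ENNReal.add_ne_top.2 ⟨hu, hrv⟩), ENNReal.toReal_add hu hrv,
    ENNReal.toReal_mul, ENNReal.toReal_ofReal hr] at h

theorem stmt8_general (d : ℕ) (Λ : Set ℝ) (hΛsub : Λ ⊆ Set.Ioo 0 1)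
    (C₁ : ℝ) (hC₁ : 0 < C₁) :
    ∃ C : ℝ, 0 < C ∧ ∀ δ : ℝ, 0 < δ → δ ≤ 1 →
      ∀ A B : Set (ℝ × (Fin d → ℝ)), ∀ t ∈ Λ, ∀ b : ℝ,
        IsCompact A → IsCompact B → A.Nonempty →
        |(volume A).toReal - 1| ≤ C₁ * δ →
        |(volume B).toReal - 1| ≤ C₁ * δ →
        (∀ x : ℝ, b ≤ x →
          volume {y | (x, y) ∈ B} ≤
            volume {y | (sSup {x' : ℝ | {y | (x', y) ∈ A}.Nonempty}, y) ∈ A}) →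
        volume (t • A + (1 - t) • B) <
          ENNReal.ofReal ((volume A).toReal ^ t * (volume B).toReal ^ (1 - t) + δ) →
        volume (t • A + (1 - t) • (B ∩ {p | p.1 ≤ b})) <
          ENNReal.ofReal ((volume A).toReal ^ t
            * (volume (B ∩ {p | p.1 ≤ b})).toReal ^ (1 - t)
            + C * δ + C * (volume (B \ {p | p.1 ≤ b})).toReal ^ 2) := by
  refine ⟨5 * C₁ + 16, by positivity, fun δ hδ _ A B t ht b hA hB _ hvolA hvolB hslice hlt => ?_⟩
  have hgain := prod_smul_add_smul_inter_add_ofReal_mul_le (hΛsub ht)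
    (satisfiesBrunnMinkowski_volume_pi d (hΛsub ht)) hA hB
    (fun _ => hA.fst_le_sSup_nonempty_preimage_prodMk) hslice
  rw [← Measure.volume_eq_prod] at hgain
  have hBfin : volume B ≠ ⊤ := hB.measure_ne_top
  have hsplit : (volume B).toReal
      = (volume (B ∩ {p | p.1 ≤ b})).toReal + (volume (B \ {p | p.1 ≤ b})).toReal := by
    rw [← ENNReal.toReal_add (measure_ne_top_of_subset inter_subset_left hBfin)
      (measure_ne_top_of_subset sdiff_subset hBfin),
      measure_inter_add_sdiff _ (measurableSet_le measurable_fst measurable_const)]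
  rw [ENNReal.lt_ofReal_iff_toReal_lt ((le_self_add.trans hgain).trans_lt hlt).ne_top]
  refine lt_rpow_mul_rpow_add_of_add_lt (hΛsub ht) hδ ENNReal.toReal_nonneg
    ENNReal.toReal_nonneg ENNReal.toReal_nonneg hvolA (hsplit ▸ hvolB) ?_
  rw [← hsplit]
  exact ENNReal.toReal_add_mul_toReal_lt (sub_pos.2 (hΛsub ht).2).le
    (measure_ne_top_of_subset sdiff_subset hBfin) (hgain.trans_lt hlt)

/-- Lemma (localization, Lemma 3.3 of the paper), with the `O(·)` constants made explicit:
for each compact `Λ ⊆ (0,1)` and constant `C₁` governing the hypotheses `|A|,|B| = 1 + O(δ)`,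
there is a uniform constant `C` for the conclusion's `O(δ) + O(|B⁺|²)` error. -/
theorem stmt8 (d : ℕ) (hd : 0 < d) (Λ : Set ℝ) (hΛ : IsCompact Λ) (hΛsub : Λ ⊆ Set.Ioo 0 1)
    (C₁ : ℝ) (hC₁ : 0 < C₁) :
    ∃ C : ℝ, 0 < C ∧ ∀ δ : ℝ, 0 < δ → δ ≤ 1 →
      ∀ A B : Set (ℝ × (Fin d → ℝ)), ∀ t ∈ Λ, ∀ b : ℝ,
        IsCompact A → IsCompact B → A.Nonempty →
        |(volume A).toReal - 1| ≤ C₁ * δ →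
        |(volume B).toReal - 1| ≤ C₁ * δ →
        (∀ x : ℝ, b ≤ x →
          volume {y | (x, y) ∈ B} ≤
            volume {y | (sSup {x' : ℝ | {y | (x', y) ∈ A}.Nonempty}, y) ∈ A}) →
        volume (t • A + (1 - t) • B) <
          ENNReal.ofReal ((volume A).toReal ^ t * (volume B).toReal ^ (1 - t) + δ) →
        volume (t • A + (1 - t) • (B ∩ {p | p.1 ≤ b})) <
          ENNReal.ofReal ((volume A).toReal ^ t
            * (volume (B ∩ {p | p.1 ≤ b})).toReal ^ (1 - t)
            + C * δ + C * (volume (B \ {p | p.1 ≤ b})).toReal ^ 2) :=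
  stmt8_general d Λ hΛsub C₁ hC₁
end

section
/- Let (A_ν, B_ν) be sequences of Borel subsets of ℝ² with |A_ν| → 1, |B_ν| → 1, and |tA_ν + (1-t)B_ν| → 1 for a fixed t ∈ (0,1). Suppose 𝟙_{A_ν} → 𝟙_A and 𝟙_{B_ν} → 𝟙_B in L²(ℝ²) for measurable sets A, B (each consisting of its Lebesgue points). Then |tA + (1-t)B| = 1, i.e., the limit pair (A,B) achieves equality in the Brunn–Minkowski inequality. -/
/-!
The lower bound is the Brunn–Minkowski inequality in the plane,
`1 = |A|^t |B|^(1-t) ≤ |tA + (1-t)B|`. It follows from the Prékopa–Leindler inequality on `ℝ`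
applied to the section-length functions `x ↦ |K_x|`, `y ↦ |L_y|`, `z ↦ |(tK + (1-t)L)_z|` of
compact sets; the one-dimensional Prékopa–Leindler inequality itself comes from the layer-cake
formula and the one-dimensional Brunn–Minkowski inequality `|X| + |Y| ≤ |X + Y|`.

For the upper bound, `L²` convergence of indicators says `|A_ν ∆ A| → 0` and `|B_ν ∆ B| → 0`.
Let `x = ta + (1-t)b` with `a ∈ A`, `b ∈ B`. Since `a` and `b` are density points, `tA` and
`x - (1-t)B` both have density one at `ta`, so they meet in positive measure, and hence so do
`tA_ν` and `x - (1-t)B_ν` for large `ν`; that is, `x ∈ tA_ν + (1-t)B_ν` eventually. So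
`tA + (1-t)B` lies in the lower limit of the sets `tA_ν + (1-t)B_ν`, whose measures tend to `1`.
-/

open MeasureTheory Set Filter Metric
open scoped Pointwise ENNReal NNReal Topology symmDiff

theorem ENNReal.tendsto_of_tendsto_toReal {ι : Type*} {l : Filter ι} {f : ι → ℝ≥0∞}
    {c : ℝ} (hc : 0 < c) (h : Tendsto (fun i => (f i).toReal) l (𝓝 c)) :
    Tendsto f l (𝓝 (ENNReal.ofReal c)) := by
  refine (ENNReal.tendsto_ofReal h).congr' ?_
  filter_upwards [h.eventually (eventually_gt_nhds hc)] with i hi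
  exact ENNReal.ofReal_toReal (ENNReal.toReal_pos_iff.1 hi).2.ne

theorem ENNReal.rpow_mul_rpow_le_add {t : ℝ} (ht0 : 0 < t) (ht1 : t < 1) (a b : ℝ≥0∞) :
    a ^ t * b ^ (1 - t) ≤ ENNReal.ofReal t * a + ENNReal.ofReal (1 - t) * b := by
  have ht1' : 0 < 1 - t := sub_pos.2 ht1
  rcases eq_or_ne a ⊤ with rfl | ha
  · simp [ENNReal.mul_top, ht0]
  rcases eq_or_ne b ⊤ with rfl | hb
  · rw [ENNReal.mul_top (by simpa using ht1), add_top]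
    exact le_top
  lift a to ℝ≥0 using ha
  lift b to ℝ≥0 using hb
  have key := NNReal.geom_mean_le_arith_mean2_weighted t.toNNReal (1 - t).toNNReal a b
    (by rw [← Real.toNNReal_add ht0.le ht1'.le]; simp)
  rw [Real.coe_toNNReal _ ht0.le, Real.coe_toNNReal _ ht1'.le] at key
  rw [← ENNReal.coe_rpow_of_nonneg _ ht0.le, ← ENNReal.coe_rpow_of_nonneg _ ht1'.le,
    ENNReal.ofReal, ENNReal.ofReal]
  exact_mod_cast key

theorem ENNReal.iSup_rpow {ι : Sort*} (f : ι → ℝ≥0∞) {t : ℝ} (ht : 0 < t) :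
    (⨆ i, f i) ^ t = ⨆ i, f i ^ t :=
  (ENNReal.orderIsoRpow t ht).map_iSup f

theorem lintegral_eq_lintegral_meas_ofReal_lt {α : Type*} [MeasurableSpace α] (μ : Measure α)
    {f : α → ℝ≥0∞} (hf : Measurable f) (hf_top : ∀ x, f x ≠ ∞) :
    ∫⁻ x, f x ∂μ = ∫⁻ s in Ioi 0, μ {x | ENNReal.ofReal s < f x} := by
  have key := lintegral_eq_lintegral_meas_lt μ (ae_of_all _ fun x => (f x).toReal_nonneg)
    hf.ennreal_toReal.aemeasurable
  simp only [ENNReal.ofReal_toReal (hf_top _)] at key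
  rw [key]
  refine setLIntegral_congr_fun measurableSet_Ioi fun s hs => ?_
  simp_rw [ENNReal.ofReal_lt_iff_lt_toReal (le_of_lt hs) (hf_top _)]

namespace Real

theorem volume_add_volume_le_volume_add_of_isCompact_s17 {K L : Set ℝ} (hK : IsCompact K)
    (hL : IsCompact L) (hK0 : K.Nonempty) (hL0 : L.Nonempty) :
    volume K + volume L ≤ volume (K + L) := by
  set a := sSup K
  set b := sInf L
  have hbK : b +ᵥ K ⊆ (K + L) ∩ Iic (a + b) := by
    rintro _ ⟨k, hk, rfl⟩
    refine ⟨⟨k, hk, b, hL.sInf_mem hL0, add_comm k b⟩, ?_⟩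
    simpa [vadd_eq_add, add_comm b] using le_csSup hK.bddAbove hk
  have haL : a +ᵥ L ⊆ (K + L) ∩ Ici (a + b) := by
    rintro _ ⟨l, hl, rfl⟩
    exact ⟨⟨a, hK.sSup_mem hK0, l, hl, rfl⟩, add_le_add_right (csInf_le hL.bddBelow hl) a⟩
  have hdisj : AEDisjoint volume (b +ᵥ K) (a +ᵥ L) := by
    refine measure_mono_null (fun z ⟨hzK, hzL⟩ => ?_) (measure_singleton (a + b))
    exact le_antisymm (hbK hzK).2 (haL hzL).2
  calc volume K + volume L = volume ((b +ᵥ K) ∪ (a +ᵥ L)) := by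
        rw [measure_union₀ (hL.measurableSet.const_vadd a).nullMeasurableSet hdisj,
          measure_vadd, measure_vadd]
    _ ≤ volume (K + L) :=
        measure_mono (union_subset (fun z hz => (hbK hz).1) fun z hz => (haL hz).1)

theorem volume_add_volume_le_volume_add {A B : Set ℝ} (hA : MeasurableSet A)
    (hB : MeasurableSet B) (hA0 : A.Nonempty) (hB0 : B.Nonempty) :
    volume A + volume B ≤ volume (A + B) := by
  obtain ⟨a, ha⟩ := hA0
  obtain ⟨b, hb⟩ := hB0
  rw [hA.measure_eq_iSup_isCompact, hB.measure_eq_iSup_isCompact]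
  simp only [iSup_and']
  refine ENNReal.biSup_add_biSup_le' ⟨∅, empty_subset A, isCompact_empty⟩
    ⟨∅, empty_subset B, isCompact_empty⟩ fun K ⟨hKA, hK⟩ L ⟨hLB, hL⟩ => ?_
  calc volume K + volume L ≤ volume (insert a K) + volume (insert b L) := by
        gcongr <;> exact subset_insert _ _
    _ ≤ volume (insert a K + insert b L) :=
        volume_add_volume_le_volume_add_of_isCompact_s17 (hK.insert a) (hL.insert b)
          (insert_nonempty a K) (insert_nonempty b L)
    _ ≤ volume (A + B) :=
        measure_mono (add_subset_add (insert_subset ha hKA) (insert_subset hb hLB))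

variable {t : ℝ} {f g h : ℝ → ℝ≥0∞}

theorem volume_superlevel_add_le_of_iSup_eq_one (ht0 : 0 < t) (ht1 : t < 1)
    (hf : Measurable f) (hg : Measurable g) (hf1 : ⨆ x, f x = 1) (hg1 : ⨆ x, g x = 1)
    (hfgh : ∀ x y, f x ^ t * g y ^ (1 - t) ≤ h (t * x + (1 - t) * y)) (c : ℝ≥0∞) :
    ENNReal.ofReal t * volume {x | c < f x} + ENNReal.ofReal (1 - t) * volume {y | c < g y} ≤
      volume {z | c < h z} := by
  have ht1' : 0 < 1 - t := sub_pos.2 ht1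
  rcases lt_or_ge c 1 with hc1 | hc1
  · obtain ⟨x₀, hx₀⟩ := lt_iSup_iff.1 (hf1 ▸ hc1)
    obtain ⟨y₀, hy₀⟩ := lt_iSup_iff.1 (hg1 ▸ hc1)
    have hsub : t • {x | c < f x} + (1 - t) • {y | c < g y} ⊆ {z | c < h z} := by
      rintro _ ⟨_, ⟨x, hx, rfl⟩, _, ⟨y, hy, rfl⟩, rfl⟩
      calc c = c ^ t * c ^ (1 - t) := by
            rw [← ENNReal.rpow_add_of_nonneg _ _ ht0.le ht1'.le, add_sub_cancel, ENNReal.rpow_one]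
        _ < f x ^ t * g y ^ (1 - t) :=
            ENNReal.mul_lt_mul (ENNReal.rpow_lt_rpow hx ht0) (ENNReal.rpow_lt_rpow hy ht1')
        _ ≤ h (t • x + (1 - t) • y) := hfgh x y
    calc _ = volume (t • {x | c < f x}) + volume ((1 - t) • {y | c < g y}) := by
          simp [Measure.addHaar_smul, abs_of_pos ht0, abs_of_pos ht1']
      _ ≤ volume (t • {x | c < f x} + (1 - t) • {y | c < g y}) :=
          volume_add_volume_le_volume_add
            ((measurableSet_lt measurable_const hf).const_smul₀ t)
            ((measurableSet_lt measurable_const hg).const_smul₀ (1 - t))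
            (nonempty_of_mem (s := {x | c < f x}) hx₀).smul_set
            (nonempty_of_mem (s := {y | c < g y}) hy₀).smul_set
      _ ≤ _ := measure_mono hsub
  · have hf_empty : {x | c < f x} = ∅ :=
      eq_empty_of_forall_notMem fun x hx => (hf1 ▸ le_iSup f x).not_gt (hc1.trans_lt hx)
    have hg_empty : {y | c < g y} = ∅ :=
      eq_empty_of_forall_notMem fun y hy => (hg1 ▸ le_iSup g y).not_gt (hc1.trans_lt hy)
    simp [hf_empty, hg_empty]

theorem prekopaLeindler_of_iSup_eq_one (ht0 : 0 < t) (ht1 : t < 1)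
    (hf : Measurable f) (hg : Measurable g) (hh : Measurable h)
    (hf1 : ⨆ x, f x = 1) (hg1 : ⨆ x, g x = 1)
    (hfgh : ∀ x y, f x ^ t * g y ^ (1 - t) ≤ h (t * x + (1 - t) * y)) :
    ENNReal.ofReal t * (∫⁻ x, f x) + ENNReal.ofReal (1 - t) * ∫⁻ x, g x ≤
      ∫⁻ x, h x := by
  have hf_top (x : ℝ) : f x ≠ ∞ := ne_top_of_le_ne_top ENNReal.one_ne_top (hf1 ▸ le_iSup f x)
  have hg_top (x : ℝ) : g x ≠ ∞ := ne_top_of_le_ne_top ENNReal.one_ne_top (hg1 ▸ le_iSup g x)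
  -- the layer cake formula needs a finite-valued function
  set h₁ : ℝ → ℝ≥0∞ := fun z => min (h z) 1
  have hfgh₁ (x y : ℝ) : f x ^ t * g y ^ (1 - t) ≤ h₁ (t * x + (1 - t) * y) :=
    le_min (hfgh x y) (mul_le_one' (ENNReal.rpow_le_one (hf1 ▸ le_iSup f x) ht0.le)
      (ENNReal.rpow_le_one (hg1 ▸ le_iSup g y) (sub_pos.2 ht1).le))
  calc ENNReal.ofReal t * (∫⁻ x, f x) + ENNReal.ofReal (1 - t) * ∫⁻ x, g x
      = (∫⁻ s in Ioi 0, ENNReal.ofReal t * volume {x | ENNReal.ofReal s < f x}) +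
          ∫⁻ s in Ioi 0, ENNReal.ofReal (1 - t) * volume {y | ENNReal.ofReal s < g y} := by
        rw [lintegral_eq_lintegral_meas_ofReal_lt volume hf hf_top,
          lintegral_eq_lintegral_meas_ofReal_lt volume hg hg_top,
          lintegral_const_mul' _ _ ENNReal.ofReal_ne_top,
          lintegral_const_mul' _ _ ENNReal.ofReal_ne_top]
    _ ≤ ∫⁻ s in Ioi 0, volume {z | ENNReal.ofReal s < h₁ z} :=
        (le_lintegral_add _ _).trans <| lintegral_mono fun s =>
          volume_superlevel_add_le_of_iSup_eq_one ht0 ht1 hf hg hf1 hg1 hfgh₁ _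
    _ = ∫⁻ z, h₁ z := (lintegral_eq_lintegral_meas_ofReal_lt volume (hh.min measurable_const)
        fun z => ne_top_of_le_ne_top ENNReal.one_ne_top (min_le_right _ _)).symm
    _ ≤ ∫⁻ z, h z := lintegral_mono fun z => min_le_left _ _

theorem prekopaLeindler (ht0 : 0 < t) (ht1 : t < 1)
    (hf : Measurable f) (hg : Measurable g) (hh : Measurable h)
    (hf_top : ⨆ x, f x ≠ ∞) (hg_top : ⨆ x, g x ≠ ∞)
    (hfgh : ∀ x y, f x ^ t * g y ^ (1 - t) ≤ h (t * x + (1 - t) * y)) :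
    (∫⁻ x, f x) ^ t * (∫⁻ x, g x) ^ (1 - t) ≤ ∫⁻ x, h x := by
  have ht1' : 0 < 1 - t := sub_pos.2 ht1
  rcases eq_or_ne (⨆ x, f x) 0 with hf0 | hf0
  · simp [ENNReal.iSup_eq_zero.1 hf0, ENNReal.zero_rpow_of_pos ht0]
  rcases eq_or_ne (⨆ x, g x) 0 with hg0 | hg0
  · simp [ENNReal.iSup_eq_zero.1 hg0, ENNReal.zero_rpow_of_pos ht1']
  set a := (⨆ x, f x)⁻¹
  set b := (⨆ x, g x)⁻¹
  set c := a ^ t * b ^ (1 - t)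
  have hc0 : c ≠ 0 := mul_ne_zero
    (ENNReal.rpow_pos (ENNReal.inv_pos.2 hf_top) (ENNReal.inv_ne_top.2 hf0)).ne'
    (ENNReal.rpow_pos (ENNReal.inv_pos.2 hg_top) (ENNReal.inv_ne_top.2 hg0)).ne'
  have hc_top : c ≠ ∞ := ENNReal.mul_ne_top
    (ENNReal.rpow_ne_top_of_nonneg ht0.le (ENNReal.inv_ne_top.2 hf0))
    (ENNReal.rpow_ne_top_of_nonneg ht1'.le (ENNReal.inv_ne_top.2 hg0))
  have hscale (u v : ℝ≥0∞) : (a * u) ^ t * (b * v) ^ (1 - t) = c * (u ^ t * v ^ (1 - t)) := by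
    rw [ENNReal.mul_rpow_of_nonneg _ _ ht0.le, ENNReal.mul_rpow_of_nonneg _ _ ht1'.le]
    ring
  have key := prekopaLeindler_of_iSup_eq_one ht0 ht1 (hf.const_mul a) (hg.const_mul b)
    (hh.const_mul c)
    (by rw [← ENNReal.mul_iSup, ENNReal.inv_mul_cancel hf0 hf_top])
    (by rw [← ENNReal.mul_iSup, ENNReal.inv_mul_cancel hg0 hg_top])
    fun x y => (hscale _ _).trans_le (by gcongr; exact hfgh x y)
  rw [lintegral_const_mul _ hf, lintegral_const_mul _ hg, lintegral_const_mul _ hh] at key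
  rw [← ENNReal.mul_le_mul_iff_right hc0 hc_top, ← hscale]
  exact (ENNReal.rpow_mul_rpow_le_add ht0 ht1 _ _).trans key

end Real

theorem brunnMinkowski_prod_of_isCompact {t : ℝ} (ht0 : 0 < t) (ht1 : t < 1)
    {K L : Set (ℝ × ℝ)} (hK : IsCompact K) (hL : IsCompact L) :
    volume K ^ t * volume L ^ (1 - t) ≤ volume (t • K + (1 - t) • L) := by
  have ht1' : 0 < 1 - t := sub_pos.2 ht1
  have hS : IsCompact (t • K + (1 - t) • L) := (hK.smul t).add (hL.smul (1 - t))
  have hsection_top {C : Set (ℝ × ℝ)} (hC : IsCompact C) :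
      ⨆ x, volume (Prod.mk x ⁻¹' C) ≠ ∞ :=
    ne_top_of_le_ne_top (hC.image continuous_snd).measure_lt_top.ne
      (iSup_le fun x => measure_mono fun y hy => ⟨(x, y), hy, rfl⟩)
  rw [Measure.volume_eq_prod, Measure.prod_apply hK.measurableSet,
    Measure.prod_apply hL.measurableSet, Measure.prod_apply hS.measurableSet]
  refine Real.prekopaLeindler ht0 ht1 (measurable_measure_prodMk_left hK.measurableSet)
    (measurable_measure_prodMk_left hL.measurableSet)
    (measurable_measure_prodMk_left hS.measurableSet)
    (hsection_top hK) (hsection_top hL) fun x y => ?_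
  rcases (Prod.mk x ⁻¹' K).eq_empty_or_nonempty with hKx | hKx
  · simp [hKx, ENNReal.zero_rpow_of_pos ht0]
  rcases (Prod.mk y ⁻¹' L).eq_empty_or_nonempty with hLy | hLy
  · simp [hLy, ENNReal.zero_rpow_of_pos ht1']
  have hmeas {C : Set (ℝ × ℝ)} (hC : IsCompact C) (z c : ℝ) :
      MeasurableSet (c • (Prod.mk z ⁻¹' C)) :=
    (measurable_prodMk_left hC.measurableSet).const_smul₀ c
  calc _ ≤ ENNReal.ofReal t * volume (Prod.mk x ⁻¹' K) +
        ENNReal.ofReal (1 - t) * volume (Prod.mk y ⁻¹' L) :=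
        ENNReal.rpow_mul_rpow_le_add ht0 ht1 _ _
    _ = volume (t • (Prod.mk x ⁻¹' K)) + volume ((1 - t) • (Prod.mk y ⁻¹' L)) := by
        simp [Measure.addHaar_smul, abs_of_pos ht0, abs_of_pos ht1']
    _ ≤ volume (t • (Prod.mk x ⁻¹' K) + (1 - t) • (Prod.mk y ⁻¹' L)) :=
        Real.volume_add_volume_le_volume_add (hmeas hK x t) (hmeas hL y (1 - t))
          hKx.smul_set hLy.smul_set
    _ ≤ _ := measure_mono ?_
  rintro _ ⟨_, ⟨u, hu, rfl⟩, _, ⟨v, hv, rfl⟩, rfl⟩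
  exact ⟨t • (x, u), smul_mem_smul_set hu, (1 - t) • (y, v), smul_mem_smul_set hv, by simp⟩

namespace EuclideanSpace

variable {t : ℝ}

theorem brunnMinkowski_of_isCompact (ht0 : 0 < t) (ht1 : t < 1)
    {K L : Set (EuclideanSpace ℝ (Fin 2))} (hK : IsCompact K) (hL : IsCompact L) :
    volume K ^ t * volume L ^ (1 - t) ≤ volume (t • K + (1 - t) • L) := by
  let e : EuclideanSpace ℝ (Fin 2) ≃L[ℝ] ℝ × ℝ :=
    (EuclideanSpace.equiv (Fin 2) ℝ).trans (ContinuousLinearEquiv.finTwoArrow ℝ ℝ)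
  have he : MeasurePreserving e :=
    (volume_preserving_finTwoArrow ℝ).comp (PiLp.volume_preserving_ofLp (Fin 2))
  have hvol (S : Set (EuclideanSpace ℝ (Fin 2))) : volume (e '' S) = volume S := by
    rw [← he.measure_preimage_emb e.toHomeomorph.measurableEmbedding, e.injective.preimage_image]
  rw [← hvol K, ← hvol L, ← hvol (t • K + (1 - t) • L), image_add e, image_smul_set e,
    image_smul_set e]
  exact brunnMinkowski_prod_of_isCompact ht0 ht1 (hK.image e.continuous) (hL.image e.continuous)

theorem brunnMinkowski (ht0 : 0 < t) (ht1 : t < 1) {A B : Set (EuclideanSpace ℝ (Fin 2))}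
    (hA : MeasurableSet A) (hB : MeasurableSet B) :
    volume A ^ t * volume B ^ (1 - t) ≤ volume (t • A + (1 - t) • B) := by
  rw [hA.measure_eq_iSup_isCompact, hB.measure_eq_iSup_isCompact]
  simp only [ENNReal.iSup_rpow _ ht0, ENNReal.iSup_rpow _ (sub_pos.2 ht1), ENNReal.iSup_mul,
    ENNReal.mul_iSup, iSup_le_iff]
  intro L hLB hL K hKA hK
  exact (brunnMinkowski_of_isCompact ht0 ht1 hK hL).trans
    (measure_mono (add_subset_add (smul_set_mono hKA) (smul_set_mono hLB)))

end EuclideanSpace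

section MeasureSymmDiff

variable {α ι : Type*} [MeasurableSpace α] {μ : Measure α} {l : Filter ι}

theorem tendsto_measure_symmDiff_of_tendsto_eLpNorm {p : ℝ≥0∞} (hp0 : p ≠ 0)
    (hp : p ≠ ∞) {A : Set α} {s : ι → Set α} (hs : ∀ i, MeasurableSet (s i)) (hA : MeasurableSet A)
    (h : Tendsto (fun i => eLpNorm ((s i).indicator (fun _ => (1 : ℝ)) -
      A.indicator (fun _ => (1 : ℝ))) p μ) l (𝓝 0)) :
    Tendsto (fun i => μ (s i ∆ A)) l (𝓝 0) := by
  have hp_pos : 0 < p.toReal := ENNReal.toReal_pos hp0 hp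
  have key : ∀ i, μ (s i ∆ A) = eLpNorm ((s i).indicator (fun _ => (1 : ℝ)) -
      A.indicator (fun _ => (1 : ℝ))) p μ ^ p.toReal := by
    intro i
    rw [eLpNorm_indicator_sub_indicator, eLpNorm_indicator_const ((hs i).symmDiff hA) hp0 hp,
      enorm_one, one_mul, ← ENNReal.rpow_mul, one_div_mul_cancel hp_pos.ne', ENNReal.rpow_one]
  simp_rw [key]
  simpa [Function.comp_def, ENNReal.zero_rpow_of_pos hp_pos] using
    ((ENNReal.continuous_rpow_const (y := p.toReal)).tendsto 0).comp h

theorem measure_eq_of_tendsto_measure_symmDiff [l.NeBot] {A : Set α} {s : ι → Set α}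
    {c : ℝ≥0∞} (hs : Tendsto (fun i => μ (s i)) l (𝓝 c))
    (hsA : Tendsto (fun i => μ (s i ∆ A)) l (𝓝 0)) : μ A = c := by
  refine le_antisymm ?_ ?_
  · refine le_of_tendsto_of_tendsto' tendsto_const_nhds (by simpa using hsA.add hs) fun i =>
      (measure_mono (le_symmDiff_sup_left (s i) A)).trans (measure_union_le _ _)
  · refine le_of_tendsto_of_tendsto' hs (by simpa using hsA.add tendsto_const_nhds) fun i =>
      (measure_mono (le_symmDiff_sup_right (s i) A)).trans (measure_union_le _ _)

theorem eventually_nonempty_inter_of_tendsto_measure_symmDiff {S T : Set α}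
    {Ss Ts : ι → Set α} (hST : 0 < μ (S ∩ T)) (hS : Tendsto (fun i => μ (Ss i ∆ S)) l (𝓝 0))
    (hT : Tendsto (fun i => μ (Ts i ∆ T)) l (𝓝 0)) :
    ∀ᶠ i in l, (Ss i ∩ Ts i).Nonempty := by
  have hsum := hS.add hT
  rw [add_zero] at hsum
  filter_upwards [hsum.eventually (gt_mem_nhds hST)] with i hi
  refine nonempty_of_measure_ne_zero (μ := μ) fun h0 => hi.not_ge ?_
  have hsub : S ∩ T ⊆ (Ss i ∩ Ts i) ∪ (Ss i ∆ S ∪ Ts i ∆ T) := by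
    rintro x ⟨hxS, hxT⟩
    simp only [mem_union, mem_inter_iff, mem_symmDiff]
    tauto
  calc μ (S ∩ T) ≤ μ (Ss i ∩ Ts i) + μ (Ss i ∆ S ∪ Ts i ∆ T) :=
        (measure_mono hsub).trans (measure_union_le _ _)
    _ ≤ μ (Ss i ∆ S) + μ (Ts i ∆ T) := by rw [h0, zero_add]; exact measure_union_le _ _

theorem measure_le_of_forall_eventually_mem {S : Set α} {s : ℕ → Set α} {c : ℝ≥0∞}
    (hS : ∀ x ∈ S, ∀ᶠ n in atTop, x ∈ s n) (hs : Tendsto (fun n => μ (s n)) atTop (𝓝 c)) :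
    μ S ≤ c := by
  have hmono : Monotone fun N => ⋂ n ≥ N, s n := fun N M hNM =>
    biInter_mono (fun n hn => hNM.trans hn) fun _ _ => subset_rfl
  calc μ S ≤ μ (⋃ N, ⋂ n ≥ N, s n) := measure_mono fun x hx => by
        simpa using eventually_atTop.1 (hS x hx)
    _ = ⨆ N, μ (⋂ n ≥ N, s n) := hmono.measure_iUnion
    _ ≤ c := iSup_le fun N => ge_of_tendsto hs <| eventually_atTop.2
        ⟨N, fun n hn => measure_mono (biInter_subset_of_mem hn)⟩

end MeasureSymmDiff

def IsDensityPoint {E : Type*} [PseudoMetricSpace E] [MeasurableSpace E] (μ : Measure E)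
    (S : Set E) (x : E) : Prop :=
  Tendsto (fun r : ℝ => μ (S ∩ closedBall x r) / μ (closedBall x r)) (𝓝[>] 0) (𝓝 1)

namespace IsDensityPoint

theorem measure_inter_pos {E : Type*} [PseudoMetricSpace E] [MeasurableSpace E] {μ : Measure E}
    {S T : Set E} {x : E} (hS : IsDensityPoint μ S x) (hT : IsDensityPoint μ T x)
    (hTm : MeasurableSet T) : 0 < μ (S ∩ T) := by
  refine pos_iff_ne_zero.2 fun h0 => ?_
  have hle : ∀ r : ℝ, μ (S ∩ closedBall x r) / μ (closedBall x r) +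
      μ (T ∩ closedBall x r) / μ (closedBall x r) ≤ 1 := by
    intro r
    rw [← ENNReal.add_div]
    refine ENNReal.div_le_of_le_mul ?_
    rw [one_mul, ← measure_sdiff_add_inter (closedBall x r) hTm, inter_comm T]
    gcongr ?_ + _
    calc μ (S ∩ closedBall x r) ≤ μ (closedBall x r \ T ∪ S ∩ T) :=
          measure_mono fun y ⟨hyS, hyB⟩ => by by_cases hyT : y ∈ T <;> simp [*]
      _ ≤ μ (closedBall x r \ T) + μ (S ∩ T) := measure_union_le _ _
      _ = μ (closedBall x r \ T) := by rw [h0, add_zero]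
  have := le_of_tendsto' (hS.add hT) hle
  norm_num at this

variable {E : Type*} [NormedAddCommGroup E] [MeasurableSpace E] {μ : Measure E} {S : Set E} {x : E}

theorem vadd [μ.IsAddLeftInvariant] (h : IsDensityPoint μ S x) (v : E) :
    IsDensityPoint μ (v +ᵥ S) (v +ᵥ x) := by
  simpa only [IsDensityPoint, ← vadd_closedBall, ← vadd_set_inter, measure_vadd] using h

variable [NormedSpace ℝ E] [BorelSpace E] [FiniteDimensional ℝ E] [μ.IsAddHaarMeasure]

theorem smul (h : IsDensityPoint μ S x) {c : ℝ} (hc : c ≠ 0) :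
    IsDensityPoint μ (c • S) (c • x) := by
  have hc' : 0 < |c| := abs_pos.2 hc
  have hμc : ENNReal.ofReal |c ^ Module.finrank ℝ E| ≠ 0 := by simp [hc]
  have hrescale : Tendsto (fun r : ℝ => |c|⁻¹ * r) (𝓝[>] 0) (𝓝[>] 0) :=
    tendsto_iff_comap.2 (comap_mulLeft_nhdsGT_zero (inv_pos.2 hc')).ge
  refine (h.comp hrescale).congr' (eventually_mem_nhdsWithin.mono fun r (hr : 0 < r) => ?_)
  have hball : closedBall (c • x) r = c • closedBall x (|c|⁻¹ * r) := by
    rw [_root_.smul_closedBall c x (by positivity), Real.norm_eq_abs,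
      mul_inv_cancel_left₀ hc'.ne']
  simp only [Function.comp_apply]
  rw [hball, ← smul_set_inter₀ hc, Measure.addHaar_smul, Measure.addHaar_smul,
    ENNReal.mul_div_mul_left _ _ hμc ENNReal.ofReal_ne_top]

end IsDensityPoint

section Sumset

variable {E ι : Type*} [NormedAddCommGroup E] [NormedSpace ℝ E] [MeasurableSpace E]
  [BorelSpace E] [FiniteDimensional ℝ E] {μ : Measure E} [μ.IsAddHaarMeasure] {l : Filter ι}

theorem tendsto_measure_smul_symmDiff {A : Set E} {As : ι → Set E}
    (h : Tendsto (fun i => μ (As i ∆ A)) l (𝓝 0)) {c : ℝ} (hc : c ≠ 0) :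
    Tendsto (fun i => μ ((c • As i) ∆ (c • A))) l (𝓝 0) := by
  simp_rw [← smul_set_symmDiff₀ hc, Measure.addHaar_smul]
  simpa using ENNReal.Tendsto.const_mul h (Or.inr (ENNReal.pow_ne_top ENNReal.ofReal_ne_top))

theorem eventually_mem_smul_add_smul {A B : Set E} {As Bs : ι → Set E} {a b : E} {s u : ℝ}
    (hs : s ≠ 0) (hu : u ≠ 0) (hBm : MeasurableSet B)
    (ha : IsDensityPoint μ A a) (hb : IsDensityPoint μ B b)
    (hA : Tendsto (fun i => μ (As i ∆ A)) l (𝓝 0))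
    (hB : Tendsto (fun i => μ (Bs i ∆ B)) l (𝓝 0)) :
    ∀ᶠ i in l, s • a + u • b ∈ s • As i + u • Bs i := by
  set x := s • a + u • b
  have hF : IsDensityPoint μ (x +ᵥ (-u) • B) (s • a) := by
    simpa [x, vadd_eq_add] using (hb.smul (neg_ne_zero.2 hu)).vadd x
  have hpos : 0 < μ (s • A ∩ (x +ᵥ (-u) • B)) :=
    (ha.smul hs).measure_inter_pos hF ((hBm.const_smul₀ (-u)).const_vadd x)
  have hFs : Tendsto (fun i => μ ((x +ᵥ (-u) • Bs i) ∆ (x +ᵥ (-u) • B))) l (𝓝 0) := by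
    simpa only [← vadd_set_symmDiff, measure_vadd] using
      tendsto_measure_smul_symmDiff hB (neg_ne_zero.2 hu)
  filter_upwards [eventually_nonempty_inter_of_tendsto_measure_symmDiff hpos
    (tendsto_measure_smul_symmDiff hA hs) hFs]
    with i ⟨_, ⟨a', ha', rfl⟩, ⟨_, ⟨b', hb', rfl⟩, hx⟩⟩
  refine ⟨s • a', smul_mem_smul_set ha', u • b', smul_mem_smul_set hb', ?_⟩
  simp only [vadd_eq_add, neg_smul] at hx
  simp only [← hx]
  abel

end Sumset

theorem stmt17 (t : ℝ) (ht : t ∈ Set.Ioo (0:ℝ) 1)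
    (A B : Set (EuclideanSpace ℝ (Fin 2)))
    (Aν Bν : ℕ → Set (EuclideanSpace ℝ (Fin 2)))
    (hAνm : ∀ ν, MeasurableSet (Aν ν)) (hBνm : ∀ ν, MeasurableSet (Bν ν))
    (hAm : MeasurableSet A) (hBm : MeasurableSet B)
    (hA1 : Tendsto (fun ν => (volume (Aν ν)).toReal) atTop (𝓝 1))
    (hB1 : Tendsto (fun ν => (volume (Bν ν)).toReal) atTop (𝓝 1))
    (hS1 : Tendsto (fun ν => (volume (t • Aν ν + (1 - t) • Bν ν)).toReal) atTop (𝓝 1))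
    (hAconv : Tendsto (fun ν =>
        eLpNorm ((Aν ν).indicator (fun _ => (1:ℝ)) - A.indicator (fun _ => (1:ℝ))) 2 volume)
      atTop (𝓝 0))
    (hBconv : Tendsto (fun ν =>
        eLpNorm ((Bν ν).indicator (fun _ => (1:ℝ)) - B.indicator (fun _ => (1:ℝ))) 2 volume)
      atTop (𝓝 0))
    -- each of A, B consists entirely of its Lebesgue (density) points:
    (hALeb : ∀ x ∈ A, Tendsto (fun r : ℝ => volume (A ∩ closedBall x r) / volume (closedBall x r))
      (𝓝[>] 0) (𝓝 1))
    (hBLeb : ∀ x ∈ B, Tendsto (fun r : ℝ => volume (B ∩ closedBall x r) / volume (closedBall x r))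
      (𝓝[>] 0) (𝓝 1)) :
    volume (t • A + (1 - t) • B) = 1 := by
  obtain ⟨ht0, ht1⟩ := ht
  have hAΔ := tendsto_measure_symmDiff_of_tendsto_eLpNorm two_ne_zero ENNReal.ofNat_ne_top
    hAνm hAm hAconv
  have hBΔ := tendsto_measure_symmDiff_of_tendsto_eLpNorm two_ne_zero ENNReal.ofNat_ne_top
    hBνm hBm hBconv
  have hA : volume A = 1 := by
    simpa using measure_eq_of_tendsto_measure_symmDiff
      (ENNReal.tendsto_of_tendsto_toReal one_pos hA1) hAΔ
  have hB : volume B = 1 := by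
    simpa using measure_eq_of_tendsto_measure_symmDiff
      (ENNReal.tendsto_of_tendsto_toReal one_pos hB1) hBΔ
  refine le_antisymm ?_ ?_
  · refine (measure_le_of_forall_eventually_mem (fun x hx => ?_)
      (ENNReal.tendsto_of_tendsto_toReal one_pos hS1)).trans_eq ENNReal.ofReal_one
    obtain ⟨_, ⟨a, ha, rfl⟩, _, ⟨b, hb, rfl⟩, rfl⟩ := hx
    exact eventually_mem_smul_add_smul ht0.ne' (sub_pos.2 ht1).ne' hBm (hALeb a ha) (hBLeb b hb)
      hAΔ hBΔ
  · calc 1 = volume A ^ t * volume B ^ (1 - t) := by simp [hA, hB]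
      _ ≤ volume (t • A + (1 - t) • B) := EuclideanSpace.brunnMinkowski ht0 ht1 hAm hBm
end
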